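/- Assume the UB setup. Then d ≤ min{wt(a)^ℓ + 1, wt(h)}, where wt(a) and wt(h) are the Hamming weights of a and h in R_n. -/

import Mathlib

/-!
Both bounds are witnessed by explicit elements of `ker H_X \ rs H_Z`. With `f = a^(t-1)`, the
pair `(f, 1)` lies in `ker H_X` because `a f = b`, and `(h, 0)` does because `a h = 0`. Neither
lies in `rs H_Z`: since `a* h* = (x^n - 1)* = x^n - 1`, the relation `1 = a* s` would force
`h* = 0`, and `0 = a* s` forces `h = b* s = f* a* s = 0`; but `h` and `h*` are nonzero of
degree `< n`.

For the weight of `f`, multiplication gives `wt(uv) ≤ wt(u) wt(v)` and squaring (the Frobenius)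
gives `wt(u²) ≤ wt(u)`, so `2^(ℓ+1) - 1 = 2 (2^ℓ - 1) + 1` yields `wt(f) ≤ wt(a)^ℓ` by
induction. Both estimates survive reduction modulo `x^n - 1`, which only folds exponents
modulo `n`.
-/

open Polynomial

noncomputable section

/-- `R_n = F_2[x]/(x^n - 1)`. -/
abbrev Rq (n : ℕ) : Type :=
  Polynomial (ZMod 2) ⧸ Ideal.span ({X ^ n - 1} : Set (Polynomial (ZMod 2)))

/-- The canonical projection `F_2[x] → R_n`. -/
abbrev mkq (n : ℕ) : Polynomial (ZMod 2) →+* Rq n :=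
  Ideal.Quotient.mk (Ideal.span ({X ^ n - 1} : Set (Polynomial (ZMod 2))))

/-- The unique polynomial representative of degree `< n` of an element of `R_n`
(obtained by reducing any lift modulo the monic polynomial `x^n - 1`). -/
def rep (n : ℕ) (z : Rq n) : Polynomial (ZMod 2) :=
  Function.surjInv Ideal.Quotient.mk_surjective z %ₘ (X ^ n - 1)

/-- Hamming weight of an element of `R_n`: the number of nonzero coefficients of its
unique representative of degree `< n`. -/
def wtq (n : ℕ) (z : Rq n) : ℕ := (rep n z).support.card

/-- The `Z`-distance of `UB(a, ℓ)` (with `t = 2^ℓ`):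
`d_Z = min { wt(u) + wt(v) : (u,v) ∈ ker H_Z \ rs H_X }`, where
`ker H_Z = {(u,v) : b*·u + a*·v = 0}` and `rs H_X = {(a·s, b·s)}`, `b = a^t`. -/
def dZv (n : ℕ) (a : Polynomial (ZMod 2)) (t : ℕ) : ℕ :=
  sInf {m : ℕ | ∃ w : Rq n × Rq n,
    (mkq n ((a ^ t).reverse) * w.1 + mkq n a.reverse * w.2 = 0) ∧
    (¬ ∃ s : Rq n, w = (mkq n a * s, (mkq n a) ^ t * s)) ∧
    m = wtq n w.1 + wtq n w.2}

/-- The `X`-distance of `UB(a, ℓ)` (with `t = 2^ℓ`):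
`d_X = min { wt(u) + wt(v) : (u,v) ∈ ker H_X \ rs H_Z }`, where
`ker H_X = {(u,v) : a·u + b·v = 0}` and `rs H_Z = {(b*·s, a*·s)}`, `b = a^t`. -/
def dXv (n : ℕ) (a : Polynomial (ZMod 2)) (t : ℕ) : ℕ :=
  sInf {m : ℕ | ∃ w : Rq n × Rq n,
    (mkq n a * w.1 + (mkq n a) ^ t * w.2 = 0) ∧
    (¬ ∃ s : Rq n, w = (mkq n ((a ^ t).reverse) * s, mkq n a.reverse * s)) ∧
    m = wtq n w.1 + wtq n w.2}

open Finset

namespace Polynomial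

section CommRing

variable {R : Type*} [CommRing R]

theorem X_pow_sub_one_dvd_X_pow_sub_X_pow_mod (n i : ℕ) :
    (X ^ n - 1 : R[X]) ∣ X ^ i - X ^ (i % n) := by
  have hsplit : (X ^ i - X ^ (i % n) : R[X]) = X ^ (i % n) * ((X ^ n) ^ (i / n) - 1) := by
    rw [mul_sub, ← pow_mul, ← pow_add, Nat.mod_add_div, mul_one]
  rw [hsplit]
  exact dvd_mul_of_dvd_right (sub_one_dvd_pow_sub_one _ _) _

theorem modByMonic_X_pow_sub_one_eq_sum {n : ℕ} (hn : n ≠ 0) (p : R[X]) :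
    p %ₘ (X ^ n - 1) = ∑ i ∈ p.support, C (p.coeff i) * X ^ (i % n) := by
  nontriviality R
  have hmonic : (X ^ n - 1 : R[X]).Monic := by simpa using monic_X_pow_sub_C (1 : R) hn
  rw [modByMonic_eq_of_dvd_sub hmonic, (modByMonic_eq_self_iff hmonic).2]
  · rw [← C_1, degree_X_pow_sub_C (Nat.pos_of_ne_zero hn) 1, ← mem_degreeLT]
    refine Submodule.sum_mem _ fun i _ => mem_degreeLT.2 ?_
    exact (degree_C_mul_X_pow_le _ _).trans_lt
      (by exact_mod_cast Nat.mod_lt i (Nat.pos_of_ne_zero hn))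
  · nth_rw 1 [p.as_sum_support_C_mul_X_pow]
    rw [← Finset.sum_sub_distrib]
    exact Finset.dvd_sum fun i _ => by
      rw [← mul_sub]; exact dvd_mul_of_dvd_right (X_pow_sub_one_dvd_X_pow_sub_X_pow_mod n i) _

theorem card_support_modByMonic_X_pow_sub_one_le (n : ℕ) (p : R[X]) :
    #(p %ₘ (X ^ n - 1)).support ≤ #p.support := by
  rcases eq_or_ne n 0 with rfl | hn
  · simp
  classical
  refine (Finset.card_le_card fun k hk => ?_).trans (Finset.card_image_le (f := (· % n)))
  rw [modByMonic_X_pow_sub_one_eq_sum hn, mem_support_iff, finsetSum_coeff] at hk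
  by_contra hnot
  refine hk (Finset.sum_eq_zero fun i hi => ?_)
  rw [coeff_C_mul_X_pow, if_neg]
  rintro rfl
  exact hnot (Finset.mem_image_of_mem _ hi)

theorem reverse_X_pow_sub_one (n : ℕ) : (X ^ n - 1 : R[X]).reverse = -(X ^ n - 1) := by
  nontriviality R
  rw [reverse, ← C_1, natDegree_X_pow_sub_C, reflect_sub, reflect_monomial, reflect_C,
    revAt_le le_rfl, Nat.sub_self]
  simp

end CommRing

theorem support_expand_subset {R : Type*} [CommSemiring R] {p : ℕ} (hp : 0 < p) (f : R[X]) :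
    (expand R p f).support ⊆ f.support.image (p * ·) := by
  intro k hk
  rw [mem_support_iff, coeff_expand hp] at hk
  split_ifs at hk with hdvd
  · obtain ⟨m, rfl⟩ := hdvd
    rw [Nat.mul_div_cancel_left m hp] at hk
    exact Finset.mem_image_of_mem _ (mem_support_iff.2 hk)
  · exact absurd rfl hk

theorem card_support_pow_expChar_le {R : Type*} [CommSemiring R] (p : ℕ) [ExpChar R p]
    (f : R[X]) : #(f ^ p).support ≤ #f.support := by
  rw [← map_frobenius_expand]
  calc #(map (frobenius R p) (expand R p f)).support
      ≤ #(expand R p f).support := Finset.card_le_card (support_map_subset _ _)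
    _ ≤ #(f.support.image (p * ·)) :=
        Finset.card_le_card (support_expand_subset (expChar_pos R p) f)
    _ ≤ #f.support := Finset.card_image_le

end Polynomial

section Weight

variable {n : ℕ}

theorem mkq_eq_zero_iff {p : (ZMod 2)[X]} : mkq n p = 0 ↔ X ^ n - 1 ∣ p := by
  rw [Ideal.Quotient.eq_zero_iff_mem, Ideal.mem_span_singleton]

theorem mkq_rep (z : Rq n) : mkq n (rep n z) = z := by
  conv_rhs => rw [← Function.surjInv_eq Ideal.Quotient.mk_surjective z]
  rw [rep, Ideal.Quotient.mk_eq_mk_iff_sub_mem, Ideal.mem_span_singleton, dvd_sub_comm]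
  exact ⟨_, by rw [sub_eq_iff_eq_add', modByMonic_add_div]⟩

theorem wtq_mkq_le (hn : n ≠ 0) (p : (ZMod 2)[X]) : wtq n (mkq n p) ≤ #p.support := by
  have hmonic : (X ^ n - 1 : (ZMod 2)[X]).Monic := by
    simpa using monic_X_pow_sub_C (1 : ZMod 2) hn
  have hrep : rep n (mkq n p) = p %ₘ (X ^ n - 1) := by
    refine modByMonic_eq_of_dvd_sub hmonic ?_
    rw [← Ideal.mem_span_singleton, ← Ideal.Quotient.mk_eq_mk_iff_sub_mem]
    exact Function.surjInv_eq Ideal.Quotient.mk_surjective _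
  rw [wtq, hrep]
  exact card_support_modByMonic_X_pow_sub_one_le n p

theorem wtq_zero (hn : n ≠ 0) : wtq n 0 = 0 := by
  simpa using wtq_mkq_le hn 0

theorem wtq_one_le (hn : n ≠ 0) : wtq n 1 ≤ 1 := by
  simpa using (wtq_mkq_le hn (C 1 * X ^ 0)).trans card_support_C_mul_X_pow_le_one

theorem wtq_mul_le (hn : n ≠ 0) (x y : Rq n) : wtq n (x * y) ≤ wtq n x * wtq n y := by
  conv_lhs => rw [← mkq_rep x, ← mkq_rep y, ← map_mul]
  exact (wtq_mkq_le hn _).trans card_support_mul_le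

theorem wtq_sq_le (hn : n ≠ 0) (x : Rq n) : wtq n (x ^ 2) ≤ wtq n x := by
  conv_lhs => rw [← mkq_rep x, ← map_pow]
  exact (wtq_mkq_le hn _).trans (card_support_pow_expChar_le 2 _)

theorem wtq_pow_two_pow_sub_one_le (hn : n ≠ 0) (x : Rq n) (ℓ : ℕ) :
    wtq n (x ^ (2 ^ ℓ - 1)) ≤ wtq n x ^ ℓ := by
  induction ℓ with
  | zero => simpa using wtq_one_le hn
  | succ k ih =>
    have hexp : 2 ^ (k + 1) - 1 = 2 * (2 ^ k - 1) + 1 := by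
      have := Nat.one_le_two_pow (n := k); rw [pow_succ]; omega
    calc wtq n (x ^ (2 ^ (k + 1) - 1))
        = wtq n ((x ^ (2 ^ k - 1)) ^ 2 * x) := by rw [hexp, pow_succ, pow_mul']
      _ ≤ wtq n ((x ^ (2 ^ k - 1)) ^ 2) * wtq n x := wtq_mul_le hn _ _
      _ ≤ wtq n x ^ k * wtq n x := Nat.mul_le_mul_right _ ((wtq_sq_le hn _).trans ih)
      _ = wtq n x ^ (k + 1) := (pow_succ _ _).symm

end Weight

section UB

variable {n : ℕ} {a h : (ZMod 2)[X]}

theorem mkq_ne_zero_of_natDegree_lt {p : (ZMod 2)[X]} (hp : p ≠ 0) (hpn : p.natDegree < n) :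
    mkq n p ≠ 0 := by
  rw [Ne, mkq_eq_zero_iff]
  intro hdvd
  have := natDegree_le_of_dvd hdvd hp
  rw [← C_1, natDegree_X_pow_sub_C] at this
  omega

theorem ne_zero_and_natDegree_lt_of_mul_eq_X_pow_sub_one (hn : n ≠ 0) (hah : a * h = X ^ n - 1)
    (hr : 0 < a.natDegree) : h ≠ 0 ∧ h.natDegree < n := by
  have hX : (X ^ n - 1 : (ZMod 2)[X]) ≠ 0 := by
    simpa using X_pow_sub_C_ne_zero (Nat.pos_of_ne_zero hn) (1 : ZMod 2)
  obtain ⟨ha, hh⟩ := mul_ne_zero_iff.1 (hah ▸ hX)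
  have hdeg := natDegree_mul ha hh
  rw [hah, ← C_1, natDegree_X_pow_sub_C] at hdeg
  exact ⟨hh, by omega⟩

theorem mkq_reverse_mul_reverse (hah : a * h = X ^ n - 1) :
    mkq n a.reverse * mkq n h.reverse = 0 := by
  rw [← map_mul, ← reverse_mul_of_domain, hah, reverse_X_pow_sub_one, mkq_eq_zero_iff, dvd_neg]

theorem dXv_le {t : ℕ} {u v : Rq n} (hker : mkq n a * u + mkq n a ^ t * v = 0)
    (hnot : ¬ ∃ s : Rq n, (u, v) = (mkq n ((a ^ t).reverse) * s, mkq n a.reverse * s)) :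
    dXv n a t ≤ wtq n u + wtq n v :=
  Nat.sInf_le ⟨(u, v), hker, hnot, rfl⟩

theorem dXv_le_wtq_pow_pred_add_wtq_one (hah : a * h = X ^ n - 1) (hh : mkq n h.reverse ≠ 0)
    {t : ℕ} (ht : t ≠ 0) : dXv n a t ≤ wtq n (mkq n a ^ (t - 1)) + wtq n 1 := by
  refine dXv_le ?_ ?_
  · rw [mul_one, ← pow_succ', Nat.sub_one_add_one ht, ← map_pow,
      ← map_add, CharTwo.add_self_eq_zero, map_zero]
  · rintro ⟨s, hs⟩
    have hunit : (1 : Rq n) = mkq n a.reverse * s := congrArg Prod.snd hs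
    apply hh
    calc mkq n h.reverse = mkq n h.reverse * (mkq n a.reverse * s) := by rw [← hunit, mul_one]
      _ = (mkq n a.reverse * mkq n h.reverse) * s := by ring
      _ = 0 := by rw [mkq_reverse_mul_reverse hah, zero_mul]

theorem dXv_le_wtq_add_wtq_zero (hah : a * h = X ^ n - 1) (hh : mkq n h ≠ 0) {t : ℕ}
    (ht : t ≠ 0) : dXv n a t ≤ wtq n (mkq n h) + wtq n 0 := by
  refine dXv_le ?_ ?_
  · rw [mul_zero, add_zero, ← map_mul, hah, mkq_eq_zero_iff]
  · rintro ⟨s, hs⟩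
    obtain ⟨hs₁, hs₂⟩ := Prod.mk.inj hs
    apply hh
    rw [hs₁, ← Nat.sub_one_add_one ht, pow_succ,
      reverse_mul_of_domain, map_mul, mul_assoc]
    exact mul_eq_zero_of_right _ hs₂.symm

end UB

theorem stmt15_general (n : ℕ) (hn : 1 ≤ n) (a h : Polynomial (ZMod 2))
    (hah : a * h = X ^ n - 1) (hr : 0 < a.natDegree) (ℓ t : ℕ)
    (ht : t = 2 ^ ℓ) :
    min (dXv n a t) (dZv n a t) ≤
      min (wtq n (mkq n a) ^ ℓ + 1) (wtq n (mkq n h)) := by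
  have hn₀ : n ≠ 0 := Nat.one_le_iff_ne_zero.1 hn
  have ht₀ : t ≠ 0 := ht ▸ (pow_ne_zero ℓ two_ne_zero)
  obtain ⟨hh₀, hdeg⟩ := ne_zero_and_natDegree_lt_of_mul_eq_X_pow_sub_one hn₀ hah hr
  have hh := mkq_ne_zero_of_natDegree_lt hh₀ hdeg
  have hh' := mkq_ne_zero_of_natDegree_lt (reverse_eq_zero.not.2 hh₀)
    ((reverse_natDegree_le h).trans_lt hdeg)
  refine (min_le_left _ _).trans (le_min ?_ ?_)
  · calc dXv n a t ≤ wtq n (mkq n a ^ (t - 1)) + wtq n 1 :=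
          dXv_le_wtq_pow_pred_add_wtq_one hah hh' ht₀
      _ ≤ wtq n (mkq n a) ^ ℓ + 1 :=
          add_le_add (ht ▸ wtq_pow_two_pow_sub_one_le hn₀ _ ℓ) (wtq_one_le hn₀)
  · simpa only [wtq_zero hn₀, add_zero] using dXv_le_wtq_add_wtq_zero hah hh ht₀

/-- in the UB setup, `d ≤ min{wt(a)^ℓ + 1, wt(h)}`. -/
theorem stmt15 (n : ℕ) (hn : 1 ≤ n) (a h : Polynomial (ZMod 2))
    (hah : a * h = X ^ n - 1) (hr : 0 < a.natDegree) (ℓ t : ℕ) (hℓ : 1 ≤ ℓ)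
    (ht : t = 2 ^ ℓ) :
    min (dXv n a t) (dZv n a t) ≤
      min (wtq n (mkq n a) ^ ℓ + 1) (wtq n (mkq n h)) :=
  stmt15_general n hn a h hah hr ℓ t ht

end
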